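/- arXiv:2303.07809 — 7 statements merged into one kernel-verified Lean document; each statement's English description precedes it below -/
import Mathlib

section
/- Let X be a finite-dimensional real normed vector space ordered by a closed cone X₊ with non-empty topological interior, and let L(X)₊ := {T ∈ L(X) : T X₊ ⊆ X₊}. For every x in the interior of X₊ and every x' in the interior of the dual cone X₊', the rank-one operator x ⊗ x' (defined by (x ⊗ x')y := ⟨x', y⟩ x) lies in the topological interior of L(X)₊ in L(X); in particular, the interior of L(X)₊ is non-empty and the cone L(X)₊ is generating in L(X), i.e. L(X)₊ − L(X)₊ = L(X). -/
/-!
If `‖S - x ⊗ x'‖` is small, then for `y ∈ X₊` we have `S y = ⟨x', y⟩ x + e` with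
`‖e‖ ≤ ‖S - x ⊗ x'‖ ‖y‖`. A functional interior to the dual cone satisfies `⟨x', y⟩ ≥ c ‖y‖` on
`X₊`, so `S y = ⟨x', y⟩ (x + e / ⟨x', y⟩)` with `e / ⟨x', y⟩` small, hence `S y ∈ X₊`.
Some functional with such a bound exists because `X₊` is pointed: every point of the compact set
`X₊ ∩ {‖y‖ = 1}` is separated from `-X₊` by a positive functional, and finitely many of them sum
to one that is positive on the whole set. Finally, a cone with an interior point `T₀` is
generating, since `T = t⁻¹ (T₀ + t T) - t⁻¹ T₀` with `T₀ + t T` positive for small `t > 0`.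
-/

open Metric Set Filter Topology

theorem exists_eq_sub_of_interior_nonempty {E : Type*} [AddCommGroup E] [TopologicalSpace E]
    [IsTopologicalAddGroup E] [Module ℝ E] [ContinuousSMul ℝ E] {P : Set E}
    (hP : ∀ (l : ℝ), 0 ≤ l → ∀ x ∈ P, l • x ∈ P) (hint : (interior P).Nonempty) (v : E) :
    ∃ a ∈ P, ∃ b ∈ P, v = a - b := by
  obtain ⟨x, hx⟩ := hint
  have hlim : Tendsto (fun t : ℝ => x + t • v) (𝓝[>] 0) (𝓝 x) :=
    ((continuous_const.add (continuous_id.smul continuous_const)).tendsto' 0 x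
      (by simp)).mono_left nhdsWithin_le_nhds
  obtain ⟨t, htP, ht⟩ := ((hlim.eventually (mem_interior_iff_mem_nhds.1 hx)).and
    self_mem_nhdsWithin).exists
  refine ⟨t⁻¹ • (x + t • v), hP _ (inv_nonneg.2 ht.le) _ htP, t⁻¹ • x,
    hP _ (inv_nonneg.2 ht.le) _ (interior_subset hx), ?_⟩
  rw [smul_add, inv_smul_smul₀ ht.ne', add_sub_cancel_left]

section

variable {X : Type*} [NormedAddCommGroup X] [NormedSpace ℝ X] {C : Set X}

theorem exists_mul_norm_le_of_mem_interior_dual {f : X →L[ℝ] ℝ}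
    (hf : f ∈ interior {g : X →L[ℝ] ℝ | ∀ y ∈ C, 0 ≤ g y}) :
    ∃ c : ℝ, 0 < c ∧ ∀ y ∈ C, c * ‖y‖ ≤ f y := by
  obtain ⟨r, hr, hball⟩ := Metric.isOpen_iff.1 isOpen_interior f hf
  refine ⟨r / 2, by positivity, fun y hy => ?_⟩
  obtain ⟨g, hg, hgy⟩ := exists_dual_vector'' ℝ y
  have hmem : f - (r / 2) • g ∈ ball f r := by
    rw [mem_ball, dist_eq_norm, sub_sub_cancel_left, norm_neg, norm_smul,
      Real.norm_of_nonneg (by positivity)]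
    nlinarith
  have := interior_subset (hball hmem) y hy
  simp only [sub_apply, smul_apply, smul_eq_mul, hgy, RCLike.ofReal_real_eq_id, id] at this
  linarith

theorem smulRight_mem_interior_of_mul_norm_le
    (hC_smul : ∀ (l : ℝ), 0 ≤ l → ∀ x ∈ C, l • x ∈ C) {x : X} (hx : x ∈ interior C)
    {f : X →L[ℝ] ℝ} {c : ℝ} (hc : 0 < c) (hf : ∀ y ∈ C, c * ‖y‖ ≤ f y) :
    f.smulRight x ∈ interior {S : X →L[ℝ] X | ∀ y ∈ C, S y ∈ C} := by
  obtain ⟨δ, hδ, hball⟩ := Metric.isOpen_iff.1 isOpen_interior x hx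
  refine mem_interior.2 ⟨ball (f.smulRight x) (c * δ), fun S hS y hy => ?_, isOpen_ball,
    mem_ball_self (by positivity)⟩
  rcases eq_or_ne y 0 with rfl | hy0
  · simpa using hC_smul 0 le_rfl x (interior_subset hx)
  set T := f.smulRight x
  have hfy : 0 < f y := (mul_pos hc (norm_pos_iff.2 hy0)).trans_le (hf y hy)
  have hSy : S y = f y • (x + (f y)⁻¹ • (S - T) y) := by
    have hTy : T y = f y • x := rfl
    rw [smul_add, smul_inv_smul₀ hfy.ne', sub_apply, hTy, add_sub_cancel]
  have hnear : ‖(f y)⁻¹ • (S - T) y‖ < δ := by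
    rw [norm_smul, Real.norm_of_nonneg (inv_nonneg.2 hfy.le), inv_mul_lt_iff₀ hfy]
    have hST : ‖S - T‖ < c * δ := by rwa [mem_ball, dist_eq_norm] at hS
    calc ‖(S - T) y‖ ≤ ‖S - T‖ * ‖y‖ := (S - T).le_opNorm y
      _ < c * δ * ‖y‖ := by gcongr
      _ ≤ f y * δ := by nlinarith [hf y hy]
  rw [hSy]
  refine hC_smul _ hfy.le _ (interior_subset (hball ?_))
  rwa [mem_ball, dist_eq_norm, add_sub_cancel_left]

theorem exists_dual_pos_of_mem_of_ne_zero (hC_closed : IsClosed C)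
    (hC_add : ∀ x ∈ C, ∀ y ∈ C, x + y ∈ C) (hC_smul : ∀ (l : ℝ), 0 ≤ l → ∀ x ∈ C, l • x ∈ C)
    (hC_pointed : C ∩ (-C) = {0}) {y : X} (hy : y ∈ C) (hy0 : y ≠ 0) :
    ∃ f : X →L[ℝ] ℝ, (∀ z ∈ C, 0 ≤ f z) ∧ 0 < f y := by
  let K : ProperCone ℝ X :=
    { carrier := C
      add_mem' := fun ha hb => hC_add _ ha _ hb
      zero_mem' := by simpa using hC_smul 0 le_rfl y hy
      smul_mem' := fun r _ hz => hC_smul r r.2 _ hz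
      isClosed' := hC_closed }
  have hy_neg : -y ∉ K := fun h => hy0 (hC_pointed.subset ⟨hy, Set.mem_neg.2 h⟩)
  obtain ⟨f, hfK, hfy⟩ := K.hyperplane_separation_point hy_neg
  exact ⟨f, hfK, by simpa using hfy⟩

theorem exists_mul_norm_le_of_pointed [FiniteDimensional ℝ X] (hC_closed : IsClosed C)
    (hC_add : ∀ x ∈ C, ∀ y ∈ C, x + y ∈ C) (hC_smul : ∀ (l : ℝ), 0 ≤ l → ∀ x ∈ C, l • x ∈ C)
    (hC_pointed : C ∩ (-C) = {0}) :
    ∃ f : X →L[ℝ] ℝ, ∃ c : ℝ, 0 < c ∧ ∀ y ∈ C, c * ‖y‖ ≤ f y := by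
  let D := {f : X →L[ℝ] ℝ | ∀ z ∈ C, 0 ≤ f z}
  have hK : IsCompact (C ∩ sphere 0 1) := (isCompact_sphere 0 1).inter_left hC_closed
  obtain ⟨t, hcover⟩ := hK.elim_finite_subcover (fun f : D => {z | 0 < (f : X →L[ℝ] ℝ) z})
    (fun f => isOpen_lt continuous_const f.1.continuous) fun z hz => by
      obtain ⟨f, hfD, hfz⟩ := exists_dual_pos_of_mem_of_ne_zero hC_closed hC_add hC_smul
        hC_pointed hz.1 (ne_zero_of_mem_unit_sphere ⟨z, hz.2⟩)
      exact mem_iUnion.2 ⟨⟨f, hfD⟩, hfz⟩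
  let g := ∑ f ∈ t, (f : X →L[ℝ] ℝ)
  have hg_pos : ∀ z ∈ C ∩ sphere 0 1, 0 < g z := fun z hz => by
    obtain ⟨f, hft, hfz⟩ := mem_iUnion₂.1 (hcover hz)
    rw [sum_apply]
    exact hfz.trans_le (Finset.single_le_sum (fun f _ => f.2 z hz.1) hft)
  obtain ⟨c, hc, hcg⟩ := hK.exists_forall_le' g.continuous.continuousOn hg_pos
  refine ⟨g, c, hc, fun y hy => ?_⟩
  rcases eq_or_ne y 0 with rfl | hy0
  · simp
  have hny : 0 < ‖y‖ := norm_pos_iff.2 hy0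
  have := hcg (‖y‖⁻¹ • y) ⟨hC_smul _ (inv_nonneg.2 hny.le) y hy, by simp [norm_smul, hy0]⟩
  rwa [map_smul, smul_eq_mul, le_inv_mul_iff₀ hny, mul_comm] at this

end

/-- For a finite-dimensional real normed space `X` ordered by a closed cone
`C` with non-empty interior: for every `x` in the interior of `C` and every `x'` in the
interior of the dual cone, the rank-one operator `x ⊗ x' : y ↦ ⟨x', y⟩ x` lies in the
interior of the cone `L(X)₊` of nonnegative operators; in particular this interior is
non-empty and `L(X)₊` is generating. -/
theorem rankOne_mem_interior_operatorCone
    (X : Type*) [NormedAddCommGroup X] [NormedSpace ℝ X] [FiniteDimensional ℝ X]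
    (C : Set X) (hC_closed : IsClosed C)
    (hC_add : ∀ x ∈ C, ∀ y ∈ C, x + y ∈ C)
    (hC_smul : ∀ (l : ℝ), 0 ≤ l → ∀ x ∈ C, l • x ∈ C)
    (hC_pointed : C ∩ (-C) = {0})
    (hC_int : (interior C).Nonempty) :
    (∀ x ∈ interior C, ∀ x' ∈ interior {f : X →L[ℝ] ℝ | ∀ y ∈ C, 0 ≤ f y},
        ContinuousLinearMap.smulRight x' x ∈ interior {S : X →L[ℝ] X | ∀ y ∈ C, S y ∈ C}) ∧
      (interior {S : X →L[ℝ] X | ∀ y ∈ C, S y ∈ C}).Nonempty ∧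
      (∀ T : X →L[ℝ] X, ∃ T₁ ∈ {S : X →L[ℝ] X | ∀ y ∈ C, S y ∈ C},
        ∃ T₂ ∈ {S : X →L[ℝ] X | ∀ y ∈ C, S y ∈ C}, T = T₁ - T₂) := by
  obtain ⟨x₀, hx₀⟩ := hC_int
  have h_rankOne : ∀ x ∈ interior C, ∀ x' ∈ interior {f : X →L[ℝ] ℝ | ∀ y ∈ C, 0 ≤ f y},
      x'.smulRight x ∈ interior {S : X →L[ℝ] X | ∀ y ∈ C, S y ∈ C} := fun x hx x' hx' => by
    obtain ⟨c, hc, hx'c⟩ := exists_mul_norm_le_of_mem_interior_dual hx'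
    exact smulRight_mem_interior_of_mul_norm_le hC_smul hx hc hx'c
  obtain ⟨f, c, hc, hfc⟩ := exists_mul_norm_le_of_pointed hC_closed hC_add hC_smul hC_pointed
  have h_int : (interior {S : X →L[ℝ] X | ∀ y ∈ C, S y ∈ C}).Nonempty :=
    ⟨_, smulRight_mem_interior_of_mul_norm_le hC_smul hx₀ hc hfc⟩
  exact ⟨h_rankOne, h_int, exists_eq_sub_of_interior_nonempty
    (fun l hl S hS y hy => hC_smul l hl _ (hS y hy)) h_int⟩
end

section
/- Let X be a finite-dimensional real normed vector space ordered by a closed cone X₊ with non-empty topological interior, and let A : X → X be linear. Then the semigroup (e^{tA})_{t≥0} is uniformly eventually nonnegative with respect to X₊ if and only if the dual semigroup (e^{tA'})_{t≥0} on X' is uniformly eventually nonnegative with respect to the dual cone X₊'. -/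
/-!
The dual semigroup is `e^{tA'} = (e^{tA})'`, since `B ↦ B'` is a continuous ring
anti-homomorphism and so commutes with the exponential series. Hence `e^{tA'}` maps the dual
cone into itself iff `⟨x', e^{tA} x⟩ ≥ 0` for all `x ∈ X₊` and `x' ∈ X₊'`. This is implied by
`e^{tA} X₊ ⊆ X₊`, and conversely implies it because a closed convex cone is its own bidual
(Hahn–Banach).
-/

open NormedSpace MulOpposite

namespace ContinuousLinearMap

variable {𝕜 E F : Type*} [RCLike 𝕜] [NormedAddCommGroup E] [NormedSpace 𝕜 E]
  [NormedAddCommGroup F] [NormedSpace 𝕜 F]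

variable (𝕜 E F) in
noncomputable def precompRingHom : (E →L[𝕜] E) →+* ((E →L[𝕜] F) →L[𝕜] (E →L[𝕜] F))ᵐᵒᵖ where
  toFun B := op ((compL 𝕜 E E F).flip B)
  map_one' := by congr 1
  map_mul' _ _ := rfl
  map_zero' := by simp
  map_add' _ _ := by simp

theorem precompRingHom_apply (B : E →L[𝕜] E) :
    precompRingHom 𝕜 E F B = op ((compL 𝕜 E E F).flip B) :=
  rfl

theorem continuous_precompRingHom : Continuous (precompRingHom 𝕜 E F) :=
  continuous_op.comp (compL 𝕜 E E F).flip.continuous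

theorem exp_compL_flip [CompleteSpace E] (B : E →L[𝕜] E) :
    exp ((compL 𝕜 E E F).flip B) = (compL 𝕜 E E F).flip (exp B) := by
  have h := map_exp_of_mem_ball (𝕂 := 𝕜) (precompRingHom 𝕜 E F) continuous_precompRingHom B
    ((expSeries_radius_eq_top 𝕜 (E →L[𝕜] E)).symm ▸ edist_lt_top _ _)
  rw [precompRingHom_apply, precompRingHom_apply, exp_op] at h
  exact (op_injective h).symm

end ContinuousLinearMap

theorem mem_closedCone_of_forall_dual_nonneg {E : Type*} [TopologicalSpace E] [AddCommGroup E]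
    [IsTopologicalAddGroup E] [Module ℝ E] [ContinuousSMul ℝ E] [LocallyConvexSpace ℝ E]
    {C : Set E} (hC_closed : IsClosed C) (hC_add : ∀ x ∈ C, ∀ y ∈ C, x + y ∈ C)
    (hC_smul : ∀ (l : ℝ), 0 ≤ l → ∀ x ∈ C, l • x ∈ C) (hC_zero : (0 : E) ∈ C) {x : E}
    (hx : ∀ f : StrongDual ℝ E, (∀ y ∈ C, 0 ≤ f y) → 0 ≤ f x) : x ∈ C := by
  let K : ProperCone ℝ E :=
    { carrier := C
      add_mem' := fun hy hz => hC_add _ hy _ hz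
      zero_mem' := hC_zero
      smul_mem' := fun c y hy => hC_smul c c.2 y hy
      isClosed' := hC_closed }
  by_contra hxC
  obtain ⟨f, hf, hfx⟩ := K.hyperplane_separation_point hxC
  exact hfx.not_ge (hx f hf)

theorem uniformly_eventually_nonneg_iff_dual_general
    (X : Type*) [NormedAddCommGroup X] [NormedSpace ℝ X] [FiniteDimensional ℝ X]
    (C : Set X) (hC_closed : IsClosed C)
    (hC_add : ∀ x ∈ C, ∀ y ∈ C, x + y ∈ C)
    (hC_smul : ∀ (l : ℝ), 0 ≤ l → ∀ x ∈ C, l • x ∈ C)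
    (hC_pointed : C ∩ (-C) = {0})
    (A : X →L[ℝ] X) :
    (∃ t₀ : ℝ, 0 ≤ t₀ ∧ ∀ t : ℝ, t₀ ≤ t → ∀ x ∈ C, NormedSpace.exp (t • A) x ∈ C) ↔
      (∃ t₀ : ℝ, 0 ≤ t₀ ∧ ∀ t : ℝ, t₀ ≤ t →
        ∀ x' ∈ {f : X →L[ℝ] ℝ | ∀ x ∈ C, 0 ≤ f x},
          NormedSpace.exp (t • (ContinuousLinearMap.compL ℝ X X ℝ).flip A) x' ∈
            {f : X →L[ℝ] ℝ | ∀ x ∈ C, 0 ≤ f x}) := by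
  have hC_zero : (0 : X) ∈ C := (hC_pointed.ge rfl).1
  have hdual (t : ℝ) (f : X →L[ℝ] ℝ) (x : X) :
      exp (t • (ContinuousLinearMap.compL ℝ X X ℝ).flip A) f x = f (exp (t • A) x) := by
    rw [← map_smul, ContinuousLinearMap.exp_compL_flip]
    rfl
  constructor
  · rintro ⟨t₀, ht₀, h⟩
    exact ⟨t₀, ht₀, fun t ht f hf x hx => (hdual t f x).symm ▸ hf _ (h t ht x hx)⟩
  · rintro ⟨t₀, ht₀, h⟩
    refine ⟨t₀, ht₀, fun t ht x hx => ?_⟩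
    exact mem_closedCone_of_forall_dual_nonneg hC_closed hC_add hC_smul hC_zero
      fun f hf => hdual t f x ▸ h t ht f hf x hx

/-- For a finite-dimensional real normed space `X` ordered by a closed cone
`C` with non-empty interior and a linear operator `A` on `X`, the semigroup `(e^{tA})_{t ≥ 0}`
is uniformly eventually nonnegative w.r.t. `C` iff the dual semigroup `(e^{tA'})_{t ≥ 0}` is
uniformly eventually nonnegative w.r.t. the dual cone. -/
theorem uniformly_eventually_nonneg_iff_dual
    (X : Type*) [NormedAddCommGroup X] [NormedSpace ℝ X] [FiniteDimensional ℝ X]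
    (C : Set X) (hC_closed : IsClosed C)
    (hC_add : ∀ x ∈ C, ∀ y ∈ C, x + y ∈ C)
    (hC_smul : ∀ (l : ℝ), 0 ≤ l → ∀ x ∈ C, l • x ∈ C)
    (hC_pointed : C ∩ (-C) = {0})
    (hC_int : (interior C).Nonempty)
    (A : X →L[ℝ] X) :
    (∃ t₀ : ℝ, 0 ≤ t₀ ∧ ∀ t : ℝ, t₀ ≤ t → ∀ x ∈ C, NormedSpace.exp (t • A) x ∈ C) ↔
      (∃ t₀ : ℝ, 0 ≤ t₀ ∧ ∀ t : ℝ, t₀ ≤ t →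
        ∀ x' ∈ {f : X →L[ℝ] ℝ | ∀ x ∈ C, 0 ≤ f x},
          NormedSpace.exp (t • (ContinuousLinearMap.compL ℝ X X ℝ).flip A) x' ∈
            {f : X →L[ℝ] ℝ | ∀ x ∈ C, 0 ≤ f x}) :=
  uniformly_eventually_nonneg_iff_dual_general X C hC_closed hC_add hC_smul hC_pointed A
end

section
/- Let d ≥ 1, let ℝ^d be ordered by a closed cone X₊ with non-empty topological interior, and let A ∈ ℝ^{d×d}. Assume that the spectral bound s(A) is an eigenvalue of A, that the eigenspace ker(s(A) − A) is spanned by a vector x₀ lying in the topological interior of X₊, and that the dual eigenspace ker(s(A) − A') contains a non-zero functional x₀' in the dual cone X₊'. Then the eigenvalue s(A) of A is algebraically simple, i.e., ker((s(A) − A)²) = ker(s(A) − A) and this space is one-dimensional. -/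
open scoped Matrix

/-- Let `ℝ^d` (`d ≥ 1`) be ordered by a closed cone `C` with non-empty
interior and let `A` be a real `d × d` matrix. Assume the spectral bound `s(A)` is an
eigenvalue of `A`, that the eigenspace `ker(s(A) - A)` is spanned by a vector `x₀` in the
interior of `C`, and that the dual eigenspace `ker(s(A) - Aᵀ)` contains a non-zero functional
`x₀'` in the dual cone. Then the eigenvalue `s(A)` is algebraically simple, i.e.
`ker((s(A) - A)²) = ker(s(A) - A)` and this space is one-dimensional. -/
theorem spectral_bound_algebraically_simple
    (d : ℕ) (hd : 1 ≤ d)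
    (C : Set (Fin d → ℝ)) (hC_closed : IsClosed C)
    (hC_add : ∀ x ∈ C, ∀ y ∈ C, x + y ∈ C)
    (hC_smul : ∀ (l : ℝ), 0 ≤ l → ∀ x ∈ C, l • x ∈ C)
    (hC_pointed : C ∩ (-C) = {0})
    (hC_int : (interior C).Nonempty)
    (A : Matrix (Fin d) (Fin d) ℝ) (s : ℝ)
    (hs : IsGreatest {r : ℝ | ∃ μ : ℂ,
      (∃ v : Fin d → ℂ, v ≠ 0 ∧ (A.map ((↑) : ℝ → ℂ)) *ᵥ v = μ • v) ∧ μ.re = r} s)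
    (h_sev : ∃ v : Fin d → ℂ, v ≠ 0 ∧ (A.map ((↑) : ℝ → ℂ)) *ᵥ v = (s : ℂ) • v)
    (x₀ : Fin d → ℝ) (hx₀ : x₀ ∈ interior C)
    (h_eig : {x : Fin d → ℝ | A *ᵥ x = s • x} = {x : Fin d → ℝ | ∃ c : ℝ, x = c • x₀})
    (x₀' : Fin d → ℝ) (hx₀'_mem : ∀ x ∈ C, 0 ≤ x₀' ⬝ᵥ x) (hx₀'_ne : x₀' ≠ 0)
    (h_dual_eig : Aᵀ *ᵥ x₀' = s • x₀') :
    ({x : Fin d → ℝ |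
        ((s • (1 : Matrix (Fin d) (Fin d) ℝ) - A) * (s • (1 : Matrix (Fin d) (Fin d) ℝ) - A))
          *ᵥ x = 0}
      = {x : Fin d → ℝ | (s • (1 : Matrix (Fin d) (Fin d) ℝ) - A) *ᵥ x = 0}) ∧
    (∃ z : Fin d → ℝ, z ≠ 0 ∧
      {x : Fin d → ℝ | (s • (1 : Matrix (Fin d) (Fin d) ℝ) - A) *ᵥ x = 0}
        = {x : Fin d → ℝ | ∃ c : ℝ, x = c • z}) := by

  classical
  set M : Matrix (Fin d) (Fin d) ℝ := s • (1 : Matrix (Fin d) (Fin d) ℝ) - A with hMdef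
  have hMv : ∀ x : Fin d → ℝ, M *ᵥ x = s • x - A *ᵥ x := by
    intro x
    simp [hMdef, Matrix.sub_mulVec, Matrix.smul_mulVec, Matrix.one_mulVec]
  have hker : ∀ x : Fin d → ℝ, M *ᵥ x = 0 ↔ A *ᵥ x = s • x := by
    intro x
    rw [hMv, sub_eq_zero, eq_comm]
  -- positivity of x₀' ⬝ᵥ x₀
  have hself : 0 < x₀' ⬝ᵥ x₀' := by
    have hnn : 0 ≤ x₀' ⬝ᵥ x₀' := Finset.sum_nonneg fun i _ => mul_self_nonneg _
    rcases hnn.lt_or_eq with h | h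
    · exact h
    · exact absurd (dotProduct_self_eq_zero.mp h.symm) hx₀'_ne
  have hnorm : 0 < ‖x₀'‖ := norm_pos_iff.mpr hx₀'_ne
  obtain ⟨ε, hε, hball⟩ := Metric.mem_nhds_iff.mp (mem_interior_iff_mem_nhds.mp hx₀)
  set t : ℝ := ε / (2 * ‖x₀'‖) with ht
  have htpos : 0 < t := div_pos hε (by positivity)
  have hmem : x₀ - t • x₀' ∈ C := by
    apply hball
    rw [Metric.mem_ball, dist_eq_norm]
    have : x₀ - t • x₀' - x₀ = -(t • x₀') := by abel
    rw [this, norm_neg, norm_smul, Real.norm_eq_abs, abs_of_pos htpos, ht]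
    rw [div_mul_eq_mul_div, mul_comm (2 : ℝ), ← div_div, mul_div_assoc,
      div_self (ne_of_gt hnorm), mul_one]
    linarith
  have hpos : 0 < x₀' ⬝ᵥ x₀ := by
    have h0 := hx₀'_mem _ hmem
    rw [dotProduct_sub, dotProduct_smul, smul_eq_mul] at h0
    nlinarith [mul_pos htpos hself]
  have hx₀_ne : x₀ ≠ 0 := by
    intro h
    rw [h, dotProduct_zero] at hpos
    exact lt_irrefl _ hpos
  -- x₀' kills the range of M
  have hdual : ∀ x : Fin d → ℝ, x₀' ⬝ᵥ (M *ᵥ x) = 0 := by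
    intro x
    rw [Matrix.dotProduct_mulVec, ← Matrix.mulVec_transpose]
    have : Mᵀ *ᵥ x₀' = 0 := by
      rw [hMdef, Matrix.transpose_sub, Matrix.transpose_smul, Matrix.transpose_one,
        Matrix.sub_mulVec, Matrix.smul_mulVec, Matrix.one_mulVec, h_dual_eig, sub_self]
    rw [this, zero_dotProduct]
  constructor
  · ext x
    simp only [Set.mem_setOf_eq]
    constructor
    · intro h
      rw [← Matrix.mulVec_mulVec] at h
      have hy : M *ᵥ x ∈ {y : Fin d → ℝ | A *ᵥ y = s • y} := (hker _).mp h
      rw [h_eig] at hy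
      obtain ⟨c, hc⟩ := hy
      have h0 : x₀' ⬝ᵥ (M *ᵥ x) = 0 := hdual x
      rw [hc, dotProduct_smul, smul_eq_mul] at h0
      have hc0 : c = 0 := by
        rcases mul_eq_zero.mp h0 with h' | h'
        · exact h'
        · exact absurd h' (ne_of_gt hpos)
      rw [hc, hc0, zero_smul]
    · intro h
      rw [← Matrix.mulVec_mulVec, h, Matrix.mulVec_zero]
  · refine ⟨x₀, hx₀_ne, ?_⟩
    ext x
    simp only [Set.mem_setOf_eq]
    rw [hker]
    constructor
    · intro h
      have : x ∈ {y : Fin d → ℝ | A *ᵥ y = s • y} := h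
      rw [h_eig] at this
      exact this
    · intro h
      have : x ∈ {y : Fin d → ℝ | ∃ c : ℝ, y = c • x₀} := h
      rw [← h_eig] at this
      exact this
end

section
/- Let d ≥ 1, let ℝ^d be ordered by a closed cone X₊ with non-empty topological interior that is polyhedral, i.e., X₊ is an intersection of finitely many closed half spaces (equivalently, the nonnegative span of finitely many vectors), and let A ∈ ℝ^{d×d}. Then the following are equivalent: (i) the semigroup (e^{tA})_{t≥0} is uniformly eventually nonnegative; (ii) it is individually eventually nonnegative; (iii) it is weakly eventually nonnegative. -/
/-!
Only finitely many vectors need to be tested. The cone is generated by finitely many vectors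
`vᵢ`, so once every `e^{tA} vᵢ` lies in the cone, all of `e^{tA} C` does. By Minkowski–Weyl the
cone is also cut out by finitely many functionals `w_k` of the dual cone, so once every
`⟨w_k, e^{tA} x⟩` is nonnegative, `e^{tA} x` lies in the cone. For Minkowski–Weyl, the dual cone
is an intersection of finitely many half spaces, hence finitely generated by Fourier–Motzkin
elimination, and since the cone is closed it is the dual of its dual cone, by Hahn–Banach.
-/

open scoped Matrix
open Set Filter

namespace PointedCone

variable {𝕜 M N P : Type*} [Field 𝕜] [LinearOrder 𝕜] [IsStrictOrderedRing 𝕜]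
  [AddCommGroup M] [Module 𝕜 M] [AddCommGroup N] [Module 𝕜 N] [AddCommGroup P] [Module 𝕜 P]

theorem apply_mem_hull_image2 (B : M →ₗ[𝕜] N →ₗ[𝕜] P) {s : Set M} {t : Set N} {x : M} {y : N}
    (hx : x ∈ hull 𝕜 s) (hy : y ∈ hull 𝕜 t) :
    B x y ∈ hull 𝕜 (image2 (fun a b ↦ B a b) s t) := by
  have h := Submodule.apply_mem_map₂ (B.restrictScalars₁₂ {c : 𝕜 // 0 ≤ c} {c : 𝕜 // 0 ≤ c}) hx hy
  rwa [Submodule.map₂_span_span] at h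

theorem eq_zero_of_mem_hull_of_nonneg {f : M →ₗ[𝕜] 𝕜} {s : Set M} (hs : ∀ b ∈ s, f b < 0)
    {x : M} (hx : x ∈ hull 𝕜 s) (hfx : 0 ≤ f x) : x = 0 := by
  suffices f x ≤ 0 ∧ (0 ≤ f x → x = 0) from this.2 hfx
  clear hfx
  induction hx using Submodule.span_induction with
  | mem b hb => exact ⟨(hs b hb).le, fun h ↦ absurd h (hs b hb).not_ge⟩
  | zero => simp
  | add a b _ _ ha hb =>
    rw [map_add]
    refine ⟨add_nonpos ha.1 hb.1, fun h ↦ ?_⟩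
    rw [ha.2 (by linarith [hb.1]), hb.2 (by linarith [ha.1]), add_zero]
  | smul c a _ ha =>
    obtain ⟨c, hc⟩ := c
    rw [Nonneg.mk_smul, map_smul, smul_eq_mul]
    refine ⟨mul_nonpos_of_nonneg_of_nonpos hc ha.1, fun h ↦ ?_⟩
    obtain rfl | hc := hc.eq_or_lt
    · exact zero_smul 𝕜 a
    · rw [ha.2 ((mul_nonneg_iff_of_pos_left hc).1 h), smul_zero]

theorem fg_top [Module.Finite 𝕜 M] : (⊤ : PointedCone 𝕜 M).FG := by
  obtain ⟨s, hs, hspan⟩ := Submodule.fg_def.1 (Module.Finite.fg_top (R := 𝕜) (M := M))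
  refine Submodule.fg_def.2 ⟨s ∪ -s, hs.union hs.neg, top_unique ?_⟩
  have : Submodule.span 𝕜 s ≤ (hull 𝕜 (s ∪ -s)).lineal :=
    Submodule.span_le.2 fun x hx ↦ ⟨subset_hull (.inl hx), subset_hull (.inr (by simpa using hx))⟩
  rw [hspan] at this
  exact fun x _ ↦ lineal_le _ (this Submodule.mem_top)

def fourierMotzkin (f : M →ₗ[𝕜] 𝕜) (s : Set M) : Set M :=
  {a ∈ s | 0 ≤ f a} ∪ image2 (fun a b ↦ f a • b - f b • a) {a ∈ s | 0 ≤ f a} {b ∈ s | f b < 0}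

theorem hull_fourierMotzkin_le (f : M →ₗ[𝕜] 𝕜) (s : Set M) :
    hull 𝕜 (fourierMotzkin f s) ≤ hull 𝕜 s ⊓ (positive 𝕜 𝕜).comap f := by
  refine Submodule.span_le.2 ?_
  rintro _ (⟨ha, hfa⟩ | ⟨a, ⟨ha, hfa⟩, b, ⟨hb, hfb⟩, rfl⟩)
  · exact ⟨subset_hull ha, hfa⟩
  · refine ⟨?_, by simp [mul_comm]⟩
    change f a • b - f b • a ∈ hull 𝕜 s
    rw [sub_eq_add_neg, ← neg_smul]
    exact add_mem (smul_mem _ hfa (subset_hull hb)) (smul_mem _ (by linarith) (subset_hull ha))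

theorem add_mem_hull_fourierMotzkin {f : M →ₗ[𝕜] 𝕜} {s : Set M} {p n : M}
    (hp : p ∈ hull 𝕜 {a ∈ s | 0 ≤ f a}) (hn : n ∈ hull 𝕜 {b ∈ s | f b < 0})
    (hfpn : 0 ≤ f (p + n)) : p + n ∈ hull 𝕜 (fourierMotzkin f s) := by
  have hpW : p ∈ hull 𝕜 (fourierMotzkin f s) := Submodule.span_mono subset_union_left hp
  have hfp : 0 ≤ f p := (Submodule.span_le (p := (positive 𝕜 𝕜).comap f)).2 (fun a ha ↦ ha.2) hp
  rw [map_add] at hfpn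
  obtain hfp | hfp := hfp.eq_or_lt
  · rw [eq_zero_of_mem_hull_of_nonneg (fun b hb ↦ hb.2) hn (by linarith), add_zero]
    exact hpW
  let B : M →ₗ[𝕜] M →ₗ[𝕜] M := LinearMap.lsmul 𝕜 M ∘ₗ f - (LinearMap.lsmul 𝕜 M ∘ₗ f).flip
  have hBW : f p • n - f n • p ∈ hull 𝕜 (fourierMotzkin f s) :=
    Submodule.span_mono subset_union_right (apply_mem_hull_image2 B hp hn)
  -- since `f (f p • n - f n • p) = 0`, adding a nonnegative multiple of `p` recovers `p + n`
  have hpn : p + n = (f p)⁻¹ • (f p • n - f n • p) + ((f p + f n) / f p) • p := by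
    match_scalars
    · field_simp
      ring
    · field_simp
  rw [hpn]
  exact add_mem (smul_mem _ (inv_nonneg.2 hfp.le) hBW)
    (smul_mem _ (div_nonneg (by linarith) hfp.le) hpW)

theorem hull_fourierMotzkin (f : M →ₗ[𝕜] 𝕜) (s : Set M) :
    hull 𝕜 (fourierMotzkin f s) = hull 𝕜 s ⊓ (positive 𝕜 𝕜).comap f := by
  refine le_antisymm (hull_fourierMotzkin_le f s) fun x ⟨hx, hfx⟩ ↦ ?_
  have hs : s = {a ∈ s | 0 ≤ f a} ∪ {b ∈ s | f b < 0} := by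
    ext a
    by_cases h : 0 ≤ f a <;> simp [h, not_le.1]
  rw [hs] at hx
  obtain ⟨p, hp, n, hn, rfl⟩ := Submodule.mem_sup.1 ((Submodule.span_union _ _).le hx)
  exact add_mem_hull_fourierMotzkin hp hn hfx

theorem FG.inf_comap_positive {C : PointedCone 𝕜 M} (hC : C.FG) (f : M →ₗ[𝕜] 𝕜) :
    (C ⊓ (positive 𝕜 𝕜).comap f).FG := by
  obtain ⟨s, hs, rfl⟩ := Submodule.fg_def.1 hC
  exact Submodule.fg_def.2 ⟨_, (hs.sep _).union ((hs.sep _).image2 _ (hs.sep _)),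
    hull_fourierMotzkin f s⟩

theorem DualFG.fg [Module.Finite 𝕜 N] {p : M →ₗ[𝕜] N →ₗ[𝕜] 𝕜} {C : PointedCone 𝕜 N}
    (hC : C.DualFG p) : C.FG := by
  classical
  obtain ⟨s, rfl⟩ := hC
  induction s using Finset.induction_on with
  | empty => simpa using fg_top
  | insert x s _ ih =>
    rw [Finset.coe_insert, dual_insert, dual_singleton, inf_comm]
    exact FG.inf_comap_positive ih (p x)

theorem coe_hull_range {ι : Type*} [Fintype ι] (v : ι → M) :
    (hull 𝕜 (range v) : Set M) = {x | ∃ c : ι → 𝕜, (∀ i, 0 ≤ c i) ∧ x = ∑ i, c i • v i} := by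
  ext x
  simp only [SetLike.mem_coe, Submodule.mem_span_range_iff_exists_fun, mem_ofPred_eq]
  constructor
  · rintro ⟨c, rfl⟩
    exact ⟨fun i ↦ c i, fun i ↦ (c i).2, rfl⟩
  · rintro ⟨c, hc, rfl⟩
    exact ⟨fun i ↦ ⟨c i, hc i⟩, rfl⟩

theorem FG.eventually_forall_mem_iff {α : Type*} {l : Filter α} {C : PointedCone 𝕜 M}
    (hC : C.FG) (T : α → M →ₗ[𝕜] M) :
    (∀ᶠ t in l, ∀ x ∈ C, T t x ∈ C) ↔ ∀ x ∈ C, ∀ᶠ t in l, T t x ∈ C := by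
  refine ⟨fun h x hx ↦ h.mono fun t ht ↦ ht x hx, fun h ↦ ?_⟩
  obtain ⟨s, hs, rfl⟩ := Submodule.fg_def.1 hC
  filter_upwards [(eventually_all_finite hs).2 fun x hx ↦ h x (subset_hull hx)] with t ht
  exact Submodule.span_le (p := (hull 𝕜 s).comap (T t)).2 ht

theorem DualFG.eventually_mem_iff {α : Type*} {l : Filter α} {p : M →ₗ[𝕜] N →ₗ[𝕜] 𝕜}
    {C : PointedCone 𝕜 N} (hC : C.DualFG p) (x : α → N) :
    (∀ᶠ t in l, x t ∈ C) ↔ ∀ y ∈ dual p.flip C, ∀ᶠ t in l, 0 ≤ p y (x t) := by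
  refine ⟨fun h y hy ↦ h.mono fun t ht ↦ hy ht, fun h ↦ ?_⟩
  obtain ⟨s, rfl⟩ := hC
  filter_upwards [(eventually_all_finset s).2 fun y hy ↦ h y (subset_dual_dual hy)] with t ht
  exact fun y hy ↦ ht y hy

section DotProduct

variable {ι : Type*} [Fintype ι] [DecidableEq ι]

theorem dual_dotProductBilin_dual_flip {C : PointedCone ℝ (ι → ℝ)}
    (hC : IsClosed (C : Set (ι → ℝ))) :
    dual (dotProductBilin ℝ ℝ) (dual (dotProductBilin ℝ ℝ).flip (C : Set (ι → ℝ))) = C := by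
  refine le_antisymm (fun x hx ↦ ?_) (subset_dual_dual (p := (dotProductBilin ℝ ℝ).flip))
  by_contra hxC
  obtain ⟨f, hfC, hfx⟩ := ProperCone.hyperplane_separation_point ⟨C, hC⟩ hxC
  set y := (dotProductEquiv ℝ ι).symm f.toLinearMap
  have hy : ∀ z, y ⬝ᵥ z = f z := fun z ↦
    LinearMap.congr_fun ((dotProductEquiv ℝ ι).apply_symm_apply f.toLinearMap) z
  have hyC : y ∈ dual (dotProductBilin ℝ ℝ).flip C := fun z hz ↦ (hy z).ge.trans' (hfC z hz)
  have hyx : 0 ≤ y ⬝ᵥ x := hx hyC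
  linarith [hy x]

theorem FG.dualFG_dotProductBilin {C : PointedCone ℝ (ι → ℝ)} (hC : C.FG)
    (hCc : IsClosed (C : Set (ι → ℝ))) : C.DualFG (dotProductBilin ℝ ℝ) := by
  obtain ⟨W, hW⟩ := (DualFG.dual_of_fg (dotProductBilin ℝ ℝ).flip hC).fg
  refine ⟨W, ?_⟩
  rw [← dual_hull, show hull ℝ (W : Set (ι → ℝ)) = _ from hW, dual_dotProductBilin_dual_flip hCc]

end DotProduct

end PointedCone

theorem exists_nonneg_forall_ge_iff_eventually_atTop {P : ℝ → Prop} :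
    (∃ t₀ : ℝ, 0 ≤ t₀ ∧ ∀ t, t₀ ≤ t → P t) ↔ ∀ᶠ t in atTop, P t :=
  (atTop_basis' 0).eventually_iff.symm

theorem eventual_nonnegativity_equivalences_of_polyhedral_general
    (d : ℕ)
    (C : Set (Fin d → ℝ)) (hC_closed : IsClosed C)
    (hC_poly : ∃ (n : ℕ) (v : Fin n → (Fin d → ℝ)),
      C = {x : Fin d → ℝ | ∃ c : Fin n → ℝ, (∀ i, 0 ≤ c i) ∧ x = ∑ i, c i • v i})
    (A : Matrix (Fin d) (Fin d) ℝ) :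
    ((∃ t₀ : ℝ, 0 ≤ t₀ ∧ ∀ t : ℝ, t₀ ≤ t → ∀ x ∈ C,
        NormedSpace.exp (t • A) *ᵥ x ∈ C) ↔
      (∀ x ∈ C, ∃ t₀ : ℝ, 0 ≤ t₀ ∧ ∀ t : ℝ, t₀ ≤ t →
        NormedSpace.exp (t • A) *ᵥ x ∈ C)) ∧
    ((∀ x ∈ C, ∃ t₀ : ℝ, 0 ≤ t₀ ∧ ∀ t : ℝ, t₀ ≤ t →
        NormedSpace.exp (t • A) *ᵥ x ∈ C) ↔
      (∀ x ∈ C, ∀ y ∈ {y' : Fin d → ℝ | ∀ x' ∈ C, 0 ≤ y' ⬝ᵥ x'},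
        ∃ t₀ : ℝ, 0 ≤ t₀ ∧ ∀ t : ℝ, t₀ ≤ t →
          0 ≤ y ⬝ᵥ (NormedSpace.exp (t • A) *ᵥ x))) := by
  obtain ⟨n, v, rfl⟩ := hC_poly
  rw [← PointedCone.coe_hull_range] at hC_closed ⊢
  have hfg : (PointedCone.hull ℝ (range v)).FG := Submodule.fg_span (finite_range v)
  simp only [exists_nonneg_forall_ge_iff_eventually_atTop]
  have hdual := PointedCone.FG.dualFG_dotProductBilin hfg hC_closed
  exact ⟨PointedCone.FG.eventually_forall_mem_iff hfg fun t ↦ (NormedSpace.exp (t • A)).mulVecLin,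
    forall₂_congr fun x _ ↦ hdual.eventually_mem_iff fun t ↦ NormedSpace.exp (t • A) *ᵥ x⟩

/-- Let `ℝ^d` (`d ≥ 1`) be ordered by a closed polyhedral cone `C` with
non-empty interior (polyhedral: `C` is the nonnegative span of finitely many vectors), and
let `A` be a real `d × d` matrix. Then uniform, individual and weak eventual nonnegativity of
the semigroup `(e^{tA})_{t ≥ 0}` are all equivalent. -/
theorem eventual_nonnegativity_equivalences_of_polyhedral
    (d : ℕ) (hd : 1 ≤ d)
    (C : Set (Fin d → ℝ)) (hC_closed : IsClosed C)
    (hC_add : ∀ x ∈ C, ∀ y ∈ C, x + y ∈ C)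
    (hC_smul : ∀ (l : ℝ), 0 ≤ l → ∀ x ∈ C, l • x ∈ C)
    (hC_pointed : C ∩ (-C) = {0})
    (hC_int : (interior C).Nonempty)
    (hC_poly : ∃ (n : ℕ) (v : Fin n → (Fin d → ℝ)),
      C = {x : Fin d → ℝ | ∃ c : Fin n → ℝ, (∀ i, 0 ≤ c i) ∧ x = ∑ i, c i • v i})
    (A : Matrix (Fin d) (Fin d) ℝ) :
    ((∃ t₀ : ℝ, 0 ≤ t₀ ∧ ∀ t : ℝ, t₀ ≤ t → ∀ x ∈ C,
        NormedSpace.exp (t • A) *ᵥ x ∈ C) ↔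
      (∀ x ∈ C, ∃ t₀ : ℝ, 0 ≤ t₀ ∧ ∀ t : ℝ, t₀ ≤ t →
        NormedSpace.exp (t • A) *ᵥ x ∈ C)) ∧
    ((∀ x ∈ C, ∃ t₀ : ℝ, 0 ≤ t₀ ∧ ∀ t : ℝ, t₀ ≤ t →
        NormedSpace.exp (t • A) *ᵥ x ∈ C) ↔
      (∀ x ∈ C, ∀ y ∈ {y' : Fin d → ℝ | ∀ x' ∈ C, 0 ≤ y' ⬝ᵥ x'},
        ∃ t₀ : ℝ, 0 ≤ t₀ ∧ ∀ t : ℝ, t₀ ≤ t →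
          0 ≤ y ⬝ᵥ (NormedSpace.exp (t • A) *ᵥ x))) :=
  eventual_nonnegativity_equivalences_of_polyhedral_general d C hC_closed hC_poly A
end

section
/- Let ℝ⁴₊ := {x ∈ ℝ⁴ : x₂² + x₃² + x₄² ≤ 2x₁x₂ and x₁ ≥ 0} (a linearly transformed ice cream cone) and let A ∈ ℝ^{4×4} be the block-diagonal matrix with upper-left 2×2 block [[0,1],[0,0]] and lower-right 2×2 block [[0, 4π],[−π, 0]]. Then the semigroup (e^{tA})_{t≥0} is individually eventually nonnegative with respect to ℝ⁴₊: for each x ∈ ℝ⁴₊ there exists t₀ ≥ 0 such that e^{tA} x ∈ ℝ⁴₊ for all t ≥ t₀. -/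
/-!
The exponential is explicit: the nilpotent block acts as the shear `(x₀, x₁) ↦ (x₀ + t x₁, x₁)`
and the other block as a periodic map that enlarges `x₂² + x₃²` at most fourfold. For `x` in the
cone, `x₁ ≥ 0` and `2 x₀ x₁` grows linearly in `t` while the remaining terms stay bounded, so the
cone inequality holds as soon as `t x₁ ≥ 3 x₀`. If `x₁ = 0` the cone forces `x₂ = x₃ = 0`, and `x`
is fixed.
-/

open scoped Matrix

/-- The linearly transformed ice cream cone in `ℝ⁴`. -/
def transformedIceCreamCone : Set (Fin 4 → ℝ) :=
  {x | (x 1) ^ 2 + (x 2) ^ 2 + (x 3) ^ 2 ≤ 2 * x 0 * x 1 ∧ 0 ≤ x 0}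

/-- The block-diagonal matrix with blocks `[[0,1],[0,0]]` and `[[0,4π],[-π,0]]`. -/
noncomputable def exampleMatrixA : Matrix (Fin 4) (Fin 4) ℝ :=
  !![0, 1, 0, 0; 0, 0, 0, 0; 0, 0, 0, 4 * Real.pi; 0, 0, -Real.pi, 0]

open NormedSpace

/-- `u ↦ exp ((t - u) • A) * F u` has zero derivative, and its values at `0` and `t` are the
two sides. -/
theorem exp_smul_eq_of_hasDerivAt {𝔸 : Type*} [NormedRing 𝔸] [NormedAlgebra ℝ 𝔸] [CompleteSpace 𝔸]
    {A : 𝔸} {F : ℝ → 𝔸} (hF₀ : F 0 = 1) (hF : ∀ s, HasDerivAt F (A * F s) s) (t : ℝ) :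
    exp (t • A) = F t := by
  have hderiv : ∀ s, HasDerivAt (fun u : ℝ => exp ((t - u) • A) * F u) 0 s := by
    intro s
    have hexp : HasDerivAt (fun u : ℝ => exp ((t - u) • A)) (-(exp ((t - s) • A) * A)) s := by
      simpa [Function.comp_def] using
        (hasDerivAt_exp_smul_const A (t - s)).scomp s ((hasDerivAt_id s).const_sub t)
    exact (hexp.mul (hF s)).congr_deriv (by rw [neg_mul, mul_assoc, neg_add_cancel])
  simpa [hF₀] using is_const_of_deriv_eq_zero (fun s => (hderiv s).differentiableAt)
      (fun s => (hderiv s).deriv) 0 t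

open Real in
noncomputable def exampleSemigroup (t : ℝ) : Matrix (Fin 4) (Fin 4) ℝ :=
  !![1, t, 0, 0;
     0, 1, 0, 0;
     0, 0, cos (2 * π * t), 2 * sin (2 * π * t);
     0, 0, -sin (2 * π * t) / 2, cos (2 * π * t)]

theorem exampleSemigroup_zero : exampleSemigroup 0 = 1 := by
  ext i j
  fin_cases i <;> fin_cases j <;> simp [exampleSemigroup]

open Real in
theorem exampleMatrixA_mul_exampleSemigroup (s : ℝ) :
    exampleMatrixA * exampleSemigroup s =
      !![0, 1, 0, 0;
         0, 0, 0, 0;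
         0, 0, -sin (2 * π * s) * (2 * π), 2 * (cos (2 * π * s) * (2 * π));
         0, 0, -(cos (2 * π * s) * (2 * π)) / 2, -sin (2 * π * s) * (2 * π)] := by
  ext i j
  fin_cases i <;> fin_cases j <;>
    simp only [exampleMatrixA, exampleSemigroup, Matrix.mul_apply, Fin.sum_univ_four,
      Matrix.of_apply, Matrix.cons_val, Matrix.cons_val', Matrix.cons_val_fin_one,
      Matrix.cons_val_one, Matrix.cons_val_zero, Fin.isValue, Fin.mk_one, Fin.reduceFinMk, Fin.zero_eta] <;> ring

-- Matrices have no global normed-ring structure; the ℓ∞ operator norm induces the product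
-- topology, so `hasDerivAt_pi` still computes derivatives entrywise.
attribute [local instance] Matrix.linftyOpNormedRing Matrix.linftyOpNormedAlgebra

open Real in
theorem hasDerivAt_exampleSemigroup (s : ℝ) :
    HasDerivAt exampleSemigroup (exampleMatrixA * exampleSemigroup s) s := by
  have hcos : HasDerivAt (fun t => cos (2 * π * t)) (-sin (2 * π * s) * (2 * π)) s := by
    simpa using ((hasDerivAt_id s).const_mul (2 * π)).cos
  have hsin : HasDerivAt (fun t => sin (2 * π * t)) (cos (2 * π * s) * (2 * π)) s := by
    simpa using ((hasDerivAt_id s).const_mul (2 * π)).sin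
  rw [exampleMatrixA_mul_exampleSemigroup]
  refine hasDerivAt_pi.2 fun i => hasDerivAt_pi.2 fun j => ?_
  fin_cases i <;> fin_cases j
  exacts [hasDerivAt_const s _, hasDerivAt_id s, hasDerivAt_const s _, hasDerivAt_const s _,
    hasDerivAt_const s _, hasDerivAt_const s _, hasDerivAt_const s _, hasDerivAt_const s _,
    hasDerivAt_const s _, hasDerivAt_const s _, hcos, hsin.const_mul 2,
    hasDerivAt_const s _, hasDerivAt_const s _, hsin.neg.div_const 2, hcos]

theorem exp_smul_exampleMatrixA (t : ℝ) : exp (t • exampleMatrixA) = exampleSemigroup t :=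
  exp_smul_eq_of_hasDerivAt exampleSemigroup_zero hasDerivAt_exampleSemigroup t

open Real in
theorem exampleSemigroup_mulVec (t : ℝ) (x : Fin 4 → ℝ) :
    exampleSemigroup t *ᵥ x = ![x 0 + t * x 1, x 1,
      cos (2 * π * t) * x 2 + 2 * sin (2 * π * t) * x 3,
      -sin (2 * π * t) / 2 * x 2 + cos (2 * π * t) * x 3] := by
  ext i
  fin_cases i <;> simp [exampleSemigroup, Matrix.mulVec, dotProduct, Fin.sum_univ_four]

-- The difference of the two sides is `3 * a ^ 2 + 3 * (c * b - s / 2 * a) ^ 2`.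
theorem sq_add_sq_le_four_mul_of_sin_cos {s c : ℝ} (hsc : s ^ 2 + c ^ 2 = 1) (a b : ℝ) :
    (c * a + 2 * s * b) ^ 2 + (-s / 2 * a + c * b) ^ 2 ≤ 4 * (a ^ 2 + b ^ 2) := by
  nlinarith [sq_nonneg a, sq_nonneg (c * b - s / 2 * a)]

theorem apply_one_nonneg_of_mem_transformedIceCreamCone {x : Fin 4 → ℝ}
    (hx : x ∈ transformedIceCreamCone) : 0 ≤ x 1 := by
  nlinarith [hx.1, hx.2, sq_nonneg (x 1), sq_nonneg (x 2), sq_nonneg (x 3)]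

theorem shear_mem_transformedIceCreamCone {x : Fin 4 → ℝ} (hx : x ∈ transformedIceCreamCone)
    {K t y₂ y₃ : ℝ} (hK : 1 ≤ K) (ht : 0 ≤ t) (htx : (K - 1) * x 0 * x 1 ≤ t * x 1 ^ 2)
    (hy : y₂ ^ 2 + y₃ ^ 2 ≤ K * (x 2 ^ 2 + x 3 ^ 2)) :
    ![x 0 + t * x 1, x 1, y₂, y₃] ∈ transformedIceCreamCone := by
  have hx₁ := apply_one_nonneg_of_mem_transformedIceCreamCone hx
  obtain ⟨hq, hx₀⟩ := hx
  refine ⟨?_, ?_⟩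
  · simp only [Matrix.cons_val]
    nlinarith [mul_le_mul_of_nonneg_left hq (sub_nonneg.2 hK)]
  · simp only [Matrix.cons_val]
    positivity

/-- The semigroup `(e^{tA})_{t ≥ 0}` is individually eventually nonnegative
with respect to the transformed ice cream cone. -/
theorem exampleSemigroup_individually_eventually_nonneg :
    ∀ x ∈ transformedIceCreamCone, ∃ t₀ : ℝ, 0 ≤ t₀ ∧ ∀ t : ℝ, t₀ ≤ t →
      NormedSpace.exp (t • exampleMatrixA) *ᵥ x ∈ transformedIceCreamCone := by
  intro x hx
  have hx₁ := apply_one_nonneg_of_mem_transformedIceCreamCone hx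
  have ht₀ : 0 ≤ 3 * x 0 / x 1 := div_nonneg (by linarith [hx.2]) hx₁
  refine ⟨3 * x 0 / x 1, ht₀, fun t ht => ?_⟩
  have htx : 3 * x 0 * x 1 ≤ t * x 1 ^ 2 := by
    rcases hx₁.eq_or_lt with h | h
    · simp [← h]
    · nlinarith [(div_le_iff₀ h).1 ht]
  rw [exp_smul_exampleMatrixA, exampleSemigroup_mulVec]
  exact shear_mem_transformedIceCreamCone hx (by norm_num) (ht₀.trans ht) (by linarith)
    (sq_add_sq_le_four_mul_of_sin_cos (Real.sin_sq_add_cos_sq _) _ _)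
end

section
/- Let ℝ⁴₊ := {x ∈ ℝ⁴ : x₂² + x₃² + x₄² ≤ 2x₁x₂ and x₁ ≥ 0} and let A ∈ ℝ^{4×4} be the block-diagonal matrix with upper-left 2×2 block [[0,1],[0,0]] and lower-right 2×2 block [[0, 4π],[−π, 0]]. Then the semigroup (e^{tA})_{t≥0} is NOT uniformly eventually nonnegative with respect to ℝ⁴₊: for every t₀ ≥ 0 there exist t ≥ t₀ and x ∈ ℝ⁴₊ such that e^{tA} x ∉ ℝ⁴₊. In fact, for each integer n ≥ 1 the vector x(n) := (n, 1, 0, √(2n−1)) lies in ℝ⁴₊ but e^{t_n A} x(n) ∉ ℝ⁴₊ for t_n := n − 3/4. -/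
open scoped Matrix

/-- The witness vectors `x(n) = (n, 1, 0, √(2n-1))`. -/
noncomputable def witnessVector (n : ℕ) : Fin 4 → ℝ :=
  ![(n : ℝ), 1, 0, Real.sqrt (2 * (n : ℝ) - 1)]

/-!
The exponential is computed blockwise: the nilpotent block gives the shear
`(x₁, x₂) ↦ (x₁ + t x₂, x₂)`, and the rotation block is the image of `2πt i` under a continuous
ring embedding `ℂ → M₂(ℝ)`, so its exponential is read off from `exp (iθ) = cos θ + i sin θ`.
At `t = n - 3/4` the rotation sends `(x₃, x₄) = (0, √(2n-1))` to `(2√(2n-1), 0)`, so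
`x₃² + x₄²` quadruples to `4(2n-1)`, while the shear only raises `2x₁x₂` from `2n` to `4n - 3/2`.
-/

open NormedSpace Real

theorem exp_eq_one_add_of_mul_self_eq_zero {𝔸 : Type*} [Ring 𝔸] [Algebra ℚ 𝔸]
    [TopologicalSpace 𝔸] [IsTopologicalRing 𝔸] {x : 𝔸} (hx : x * x = 0) :
    exp x = 1 + x := by
  have hpow : ∀ n ∉ Finset.range 2, ((n.factorial : ℚ)⁻¹ • x ^ n) = 0 := fun n hn => by
    obtain ⟨k, rfl⟩ : ∃ k, n = k + 2 := ⟨n - 2, by simp at hn; omega⟩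
    rw [pow_add, sq, hx, mul_zero, smul_zero]
  simp only [exp_eq_tsum_rat]
  rw [tsum_eq_sum hpow]
  simp [Finset.sum_range_succ]

theorem Matrix.exp_reindex {m n 𝕜 : Type*} [Fintype m] [DecidableEq m] [Fintype n]
    [DecidableEq n] [RCLike 𝕜] (e : m ≃ n) (M : Matrix m m 𝕜) :
    exp (reindex e e M) = reindex e e (exp M) := by
  open scoped Matrix.Norms.Operator in
  exact (map_exp (reindexAlgEquiv ℚ 𝕜 e) (continuous_id.matrix_reindex e e) M).symm

/-- The embedding `z ↦ !![z.re, z.im; -z.im, z.re]` conjugated by `diag(c, 1)`. -/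
noncomputable def Complex.scaledMatrixHom (c : ℝ) (hc : c ≠ 0) :
    ℂ →+* Matrix (Fin 2) (Fin 2) ℝ where
  toFun z := !![z.re, c * z.im; -z.im / c, z.re]
  map_one' := by ext i j; fin_cases i <;> fin_cases j <;> simp
  map_mul' z w := by
    ext i j
    fin_cases i <;> fin_cases j <;> simp [Matrix.mul_apply] <;> field_simp <;> ring
  map_zero' := by ext i j; fin_cases i <;> fin_cases j <;> simp
  map_add' z w := by ext i j; fin_cases i <;> fin_cases j <;> simp <;> ring

theorem Complex.continuous_scaledMatrixHom (c : ℝ) (hc : c ≠ 0) :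
    Continuous (scaledMatrixHom c hc) :=
  continuous_matrix fun i j => by
    fin_cases i <;> fin_cases j <;> simp [scaledMatrixHom] <;> fun_prop

theorem exp_scaledRotation {c : ℝ} (hc : c ≠ 0) (θ : ℝ) :
    exp !![0, c * θ; -θ / c, 0] = !![cos θ, c * sin θ; -sin θ / c, cos θ] := by
  have h : Complex.scaledMatrixHom c hc (θ * Complex.I) = !![0, c * θ; -θ / c, 0] := by
    simp [Complex.scaledMatrixHom]
  have hexp : exp (Complex.scaledMatrixHom c hc (θ * Complex.I)) =
      Complex.scaledMatrixHom c hc (Complex.exp (θ * Complex.I)) := by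
    rw [Complex.exp_eq_exp_ℂ]
    open scoped Matrix.Norms.Operator in
    exact (map_exp _ (Complex.continuous_scaledMatrixHom c hc) _).symm
  rw [← h, hexp]
  simp [Complex.scaledMatrixHom, Complex.exp_ofReal_mul_I_re, Complex.exp_ofReal_mul_I_im]

theorem exp_smul_exampleMatrixA_s15 (t : ℝ) :
    exp (t • exampleMatrixA) =
      !![1, t, 0, 0; 0, 1, 0, 0; 0, 0, cos (2 * π * t), 2 * sin (2 * π * t);
        0, 0, -sin (2 * π * t) / 2, cos (2 * π * t)] := by
  -- `blockDiagonal` indexes by (position in block, block), so block `k` sits at `2k, 2k + 1`.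
  let e : Fin 2 × Fin 2 ≃ Fin 4 :=
    { toFun p := ⟨p.1 + 2 * p.2, by omega⟩
      invFun := ![(0, 0), (1, 0), (0, 1), (1, 1)]
      left_inv := by decide
      right_inv := by decide }
  have hblocks : t • exampleMatrixA = Matrix.reindex e e (Matrix.blockDiagonal
      ![!![0, t; 0, 0], !![0, 2 * (2 * π * t); -(2 * π * t) / 2, 0]]) := by
    ext i j
    fin_cases i <;> fin_cases j <;>
      simp [exampleMatrixA, e, Matrix.blockDiagonal_apply] <;> ring
  have hexp (v : Fin 2 → Matrix (Fin 2) (Fin 2) ℝ) (k : Fin 2) : exp v k = exp (v k) := by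
    open scoped Matrix.Norms.Operator in
    exact Pi.coe_exp v k
  have hnil : exp !![0, t; 0, 0] = !![1, t; 0, 1] := by
    rw [exp_eq_one_add_of_mul_self_eq_zero (by ext i j; fin_cases i <;> fin_cases j <;> simp)]
    ext i j; fin_cases i <;> fin_cases j <;> simp
  rw [hblocks, Matrix.exp_reindex, Matrix.exp_blockDiagonal]
  ext i j
  fin_cases i <;> fin_cases j <;>
    simp [e, Matrix.blockDiagonal_apply, hexp, hnil, exp_scaledRotation (two_ne_zero' ℝ)]

theorem witnessVector_mem {n : ℕ} (hn : 1 ≤ n) : witnessVector n ∈ transformedIceCreamCone := by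
  have hn' : (1 : ℝ) ≤ n := Nat.one_le_cast.2 hn
  have hsq : √(2 * (n : ℝ) - 1) ^ 2 = 2 * n - 1 := sq_sqrt (by linarith)
  refine ⟨?_, by simp [witnessVector]⟩
  simp [witnessVector, hsq]

theorem exp_mulVec_witnessVector (n : ℕ) :
    exp (((n : ℝ) - 3 / 4) • exampleMatrixA) *ᵥ witnessVector n =
      ![2 * (n : ℝ) - 3 / 4, 1, 2 * √(2 * (n : ℝ) - 1), 0] := by
  have hangle : 2 * π * ((n : ℝ) - 3 / 4) = π / 2 + ((n - 1 : ℤ) : ℝ) * (2 * π) := by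
    push_cast; ring
  have hcos : cos (2 * π * ((n : ℝ) - 3 / 4)) = 0 := by
    rw [hangle, cos_add_int_mul_two_pi, cos_pi_div_two]
  have hsin : sin (2 * π * ((n : ℝ) - 3 / 4)) = 1 := by
    rw [hangle, sin_add_int_mul_two_pi, sin_pi_div_two]
  rw [exp_smul_exampleMatrixA_s15, hcos, hsin]
  ext i
  fin_cases i <;> simp [witnessVector, Matrix.mulVec, dotProduct, Fin.sum_univ_four]
  ring

theorem exp_mulVec_witnessVector_not_mem {n : ℕ} (hn : 1 ≤ n) :
    exp (((n : ℝ) - 3 / 4) • exampleMatrixA) *ᵥ witnessVector n ∉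
      transformedIceCreamCone := by
  have hn' : (1 : ℝ) ≤ n := Nat.one_le_cast.2 hn
  have hsq : √(2 * (n : ℝ) - 1) ^ 2 = 2 * n - 1 := sq_sqrt (by linarith)
  rw [exp_mulVec_witnessVector]
  rintro ⟨h, -⟩
  simp only [Matrix.cons_val] at h
  nlinarith

/-- The semigroup `(e^{tA})_{t ≥ 0}` is not uniformly eventually
nonnegative with respect to the transformed ice cream cone; in fact, for each `n ≥ 1` the
vector `x(n) = (n, 1, 0, √(2n-1))` lies in the cone but `e^{t_n A} x(n)` does not, where
`t_n = n - 3/4`. -/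
theorem exampleSemigroup_not_uniformly_eventually_nonneg :
    (∀ t₀ : ℝ, 0 ≤ t₀ → ∃ t : ℝ, t₀ ≤ t ∧ ∃ x ∈ transformedIceCreamCone,
      NormedSpace.exp (t • exampleMatrixA) *ᵥ x ∉ transformedIceCreamCone) ∧
    (∀ n : ℕ, 1 ≤ n →
      witnessVector n ∈ transformedIceCreamCone ∧
      NormedSpace.exp (((n : ℝ) - 3 / 4) • exampleMatrixA) *ᵥ witnessVector n ∉
        transformedIceCreamCone) := by
  have witness (n : ℕ) (hn : 1 ≤ n) :=
    And.intro (witnessVector_mem hn) (exp_mulVec_witnessVector_not_mem hn)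
  refine ⟨fun t₀ _ => ?_, witness⟩
  obtain ⟨n, hn, ht₀⟩ : ∃ n : ℕ, 1 ≤ n ∧ t₀ ≤ n - 3 / 4 :=
    ⟨⌈t₀⌉₊ + 1, by omega, by push_cast; linarith [Nat.le_ceil t₀]⟩
  exact ⟨_, ht₀, _, witness n hn⟩
end

section
/- Let X be a finite-dimensional real normed vector space ordered by a closed cone X₊ with non-empty topological interior, and let A : X → X be linear. Let L(X)₊ := {M ∈ L(X) : M X₊ ⊆ X₊} and define B : L(X) → L(X) by B(M) := AM, so that e^{tB}(M) = e^{tA} M for all t ≥ 0 and M ∈ L(X). If the semigroup (e^{tA})_{t≥0} is individually eventually nonnegative with respect to X₊ but not uniformly eventually nonnegative, then the semigroup (e^{tB})_{t≥0} on L(X) is weakly eventually nonnegative with respect to the cone L(X)₊, but not individually eventually nonnegative with respect to L(X)₊. -/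
/-!
The dual cone of `L(X)₊` is the convex cone generated by the functionals
`φ_{x,x'} : M ↦ ⟨x', M x⟩` with `x ∈ X₊`, `x' ∈ X₊'`. By the bipolar theorem this amounts to the
generated cone being closed. Normalising `x` and `x'` to unit vectors gives a compact generating
set, on which evaluation at `M₀ = f(·) e` is strictly positive, where `f` is strictly positive on
`X₊ \ {0}` (as `X₊` is pointed) and `e` is an interior point of `X₊` (so `x' e > 0` for `x' ≠ 0`);
in finite dimensions the cone generated by such a compact set is closed. Hence every `φ` in the
dual cone of `L(X)₊` is a finite nonnegative combination of functionals `φ_{xᵢ,x'ᵢ}`, and individual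
eventual nonnegativity of `e^{tA}` applied to the finitely many vectors `M xᵢ` makes
`φ(e^{tA} M)` eventually nonnegative. On the other hand `e^{tB} id = e^{tA}`, so individual
eventual nonnegativity of `e^{tB}` would give uniform eventual nonnegativity of `e^{tA}`.
-/

open Set Metric

section Cones

variable {E : Type*} [NormedAddCommGroup E] [NormedSpace ℝ E]

theorem ProperCone.inv_norm_smul_mem_sphere (C : ProperCone ℝ E) {x : E} (hx : x ∈ C)
    (hx0 : x ≠ 0) : ‖x‖⁻¹ • x ∈ (C : Set E) ∩ sphere 0 1 :=
  ⟨C.smul_mem hx (by positivity), by simp [norm_smul, hx0]⟩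

theorem ProperCone.hull_image2_eq_hull_image2_inter_sphere {F G : Type*} [NormedAddCommGroup F]
    [NormedSpace ℝ F] [AddCommGroup G] [Module ℝ G] (C : ProperCone ℝ E) (D : ProperCone ℝ F)
    {b : E → F → G} (hb : ∀ (a c : ℝ) x y, b (a • x) (c • y) = (a * c) • b x y) :
    PointedCone.hull ℝ (image2 b C D)
      = PointedCone.hull ℝ (image2 b ((C : Set E) ∩ sphere 0 1) ((D : Set F) ∩ sphere 0 1)) := by
  refine le_antisymm (Submodule.span_le.2 ?_)
    (Submodule.span_mono (image2_subset inter_subset_left inter_subset_left))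
  rintro _ ⟨x, hx, y, hy, rfl⟩
  obtain rfl | hx0 := eq_or_ne x 0
  · rw [show b 0 y = 0 by simpa using hb 0 1 0 y]
    exact zero_mem _
  obtain rfl | hy0 := eq_or_ne y 0
  · rw [show b x 0 = 0 by simpa using hb 1 0 x 0]
    exact zero_mem _
  have hscale : b x y = (‖x‖ * ‖y‖) • b (‖x‖⁻¹ • x) (‖y‖⁻¹ • y) := by
    rw [hb, smul_smul]
    field_simp
    simp
  rw [hscale]
  exact PointedCone.smul_mem _ (by positivity) <| PointedCone.subset_hull <|
    mem_image2_of_mem (C.inv_norm_smul_mem_sphere hx hx0) (D.inv_norm_smul_mem_sphere hy hy0)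

theorem ProperCone.zero_notMem_convexHull_inter_sphere (C : ProperCone ℝ E)
    (hC : ∀ x ∈ C, -x ∈ C → x = 0) : (0 : E) ∉ convexHull ℝ ((C : Set E) ∩ sphere 0 1) := by
  classical
  intro h0
  obtain ⟨ι, _, z, w, hzC, -, hw0, hw1, hsum⟩ := eq_pos_convex_span_of_mem_convexHull h0
  obtain ⟨i⟩ : Nonempty ι := by
    by_contra! hι
    simp at hw1
  have hz j : z j ∈ (C : Set E) ∩ sphere 0 1 := hzC ⟨j, rfl⟩
  rw [← Finset.add_sum_erase _ _ (Finset.mem_univ i)] at hsum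
  have hzero : w i • z i = 0 := hC _ (C.smul_mem (hz i).1 (hw0 i).le) <| by
    rw [neg_eq_of_add_eq_zero_right hsum]
    exact Submodule.sum_mem _ fun j _ => C.smul_mem (hz j).1 (hw0 j).le
  have hzi : z i = 0 := (smul_eq_zero.1 hzero).resolve_left (hw0 i).ne'
  simpa [hzi] using (hz i).2

theorem StrongDual.pos_of_mem_interior {C : Set E} {e : E} (he : e ∈ interior C)
    {x' : StrongDual ℝ E} (hx' : ∀ x ∈ C, 0 ≤ x' x) (hx'0 : x' ≠ 0) : 0 < x' e := by
  obtain ⟨ε, hε, hball⟩ := nhds_basis_closedBall.mem_iff.1 (mem_interior_iff_mem_nhds.1 he)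
  have hbound : ‖x'‖ ≤ x' e / ε := by
    refine ContinuousLinearMap.opNorm_bound_of_ball_bound hε _ x' fun z hz => ?_
    have hz' : ‖z‖ ≤ ε := by simpa using hz
    have h₁ := hx' (e + z) (hball (by simpa using hz'))
    have h₂ := hx' (e - z) (hball (by simpa [dist_eq_norm] using hz'))
    rw [map_add] at h₁
    rw [map_sub] at h₂
    rw [Real.norm_eq_abs, abs_le]
    constructor <;> linarith
  have := (norm_pos_iff.2 hx'0).trans_le hbound
  exact (div_pos_iff_of_pos_right hε).1 this

variable [FiniteDimensional ℝ E]

theorem isCompact_convexHull {s : Set E} (hs : IsCompact s) : IsCompact (convexHull ℝ s) := by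
  let g (k : ℕ) : (Fin k → ℝ) × (Fin k → E) → E := fun p => ∑ i, p.1 i • p.2 i
  -- Carathéodory: a point of the hull is a convex combination of at most `finrank ℝ E + 1`
  -- points of `s`.
  have hcover : convexHull ℝ s = ⋃ k ∈ Finset.range (Module.finrank ℝ E + 2),
      g k '' (stdSimplex ℝ (Fin k) ×ˢ univ.pi fun _ => s) := by
    refine Subset.antisymm (fun x hx => ?_) ?_
    · obtain ⟨ι, _, z, w, hzs, hind, hw0, hw1, rfl⟩ := eq_pos_convex_span_of_mem_convexHull hx
      have hcard : Fintype.card ι < Module.finrank ℝ E + 2 :=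
        Nat.lt_succ_of_le <|
          hind.card_le_finrank_succ.trans (Nat.succ_le_succ (Submodule.finrank_le _))
      let e := Fintype.equivFin ι
      refine mem_biUnion (Finset.mem_range.2 hcard)
        ⟨(w ∘ e.symm, z ∘ e.symm), ⟨⟨fun i => (hw0 _).le, ?_⟩, fun i _ => hzs ⟨_, rfl⟩⟩, ?_⟩
      · simpa [Function.comp_def] using (e.symm.sum_comp w).trans hw1
      · exact e.symm.sum_comp fun i => w i • z i
    · simp only [iUnion_subset_iff]
      rintro k - _ ⟨p, ⟨hp, hps⟩, rfl⟩
      exact (convex_convexHull ℝ s).sum_mem (fun i _ => hp.1 i) hp.2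
        fun i _ => subset_convexHull ℝ s (hps i trivial)
  rw [hcover]
  exact (Finset.range _).isCompact_biUnion fun k _ =>
    ((isCompact_stdSimplex _ _).prod (isCompact_univ_pi fun _ => hs)).image (by fun_prop)

open scoped Pointwise in
theorem PointedCone.isClosed_hull_of_isCompact {T : Set E} (hT : IsCompact T)
    {f : StrongDual ℝ E} (hf : ∀ t ∈ T, 0 < f t) : IsClosed (PointedCone.hull ℝ T : Set E) := by
  rcases T.eq_empty_or_nonempty with rfl | hTne
  · simp
  set H := convexHull ℝ T
  have hH : IsCompact H := isCompact_convexHull hT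
  obtain ⟨q₀, hq₀, hmin⟩ := hH.exists_isMinOn hTne.convexHull f.continuous.continuousOn
  have hq₀_pos : 0 < f q₀ := convexHull_min hf (convex_halfSpace_gt f.isLinear 0) hq₀
  have hcone : ∀ ψ ∈ PointedCone.hull ℝ T, ∃ r : ℝ, 0 ≤ r ∧ ψ ∈ r • H := by
    intro ψ hψ
    induction hψ using Submodule.span_induction with
    | mem t ht => exact ⟨1, zero_le_one, by simpa using subset_convexHull ℝ T ht⟩
    | zero => exact ⟨0, le_rfl, ⟨q₀, hq₀, zero_smul ℝ q₀⟩⟩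
    | add ψ₁ ψ₂ _ _ h₁ h₂ =>
      obtain ⟨r₁, hr₁, hψ₁⟩ := h₁
      obtain ⟨r₂, hr₂, hψ₂⟩ := h₂
      exact ⟨r₁ + r₂, add_nonneg hr₁ hr₂,
        (convex_convexHull ℝ T).add_smul hr₁ hr₂ ▸ add_mem_add hψ₁ hψ₂⟩
    | smul a ψ _ h =>
      obtain ⟨r, hr, hψ⟩ := h
      exact ⟨a * r, mul_nonneg a.2 hr, by
        rw [mul_smul]; exact smul_mem_smul_set hψ⟩
  have hH_hull : H ⊆ PointedCone.hull ℝ T :=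
    convexHull_min PointedCone.subset_hull (PointedCone.convex _)
  -- Since `f ≥ f q₀ > 0` on `H`, the scalar `r` of `r • q` is bounded on `{f < f ψ + 1}`,
  -- so near `ψ` the cone coincides with the compact set `Q`.
  refine isClosed_of_closure_subset fun ψ hψ => ?_
  let Q := (fun p : ℝ × E => p.1 • p.2) '' (Icc 0 ((f ψ + 1) / f q₀) ×ˢ H)
  have hQ : IsCompact Q := (isCompact_Icc.prod hH).image (by fun_prop)
  have hQ_hull : Q ⊆ PointedCone.hull ℝ T := by
    rintro _ ⟨⟨r, q⟩, ⟨⟨hr, -⟩, hq⟩, rfl⟩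
    exact Submodule.smul_mem _ ⟨r, hr⟩ (hH_hull hq)
  have hsub : {x | f x < f ψ + 1} ∩ PointedCone.hull ℝ T ⊆ Q := by
    rintro _ ⟨hfx, hx⟩
    obtain ⟨r, hr, q, hq, rfl⟩ := hcone _ hx
    refine ⟨(r, q), ⟨⟨hr, ?_⟩, hq⟩, rfl⟩
    rw [le_div_iff₀ hq₀_pos]
    have hq_ge : f q₀ ≤ f q := hmin hq
    simp only [mem_ofPred_eq, map_smul, smul_eq_mul] at hfx
    exact (mul_le_mul_of_nonneg_left hq_ge hr).trans hfx.le
  exact hQ_hull <| hQ.isClosed.closure_subset_iff.2 hsub <|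
    (isOpen_lt f.continuous continuous_const).inter_closure
      ⟨show f ψ < f ψ + 1 from lt_add_one _, hψ⟩

theorem ProperCone.exists_pos_of_salient (C : ProperCone ℝ E)
    (hC : ∀ x ∈ C, -x ∈ C → x = 0) : ∃ f : StrongDual ℝ E, ∀ x ∈ C, x ≠ 0 → 0 < f x := by
  obtain ⟨f, u, hu, hfu⟩ := geometric_hahn_banach_point_closed (convex_convexHull ℝ _)
    (isCompact_convexHull ((isCompact_sphere 0 1).inter_left C.isClosed)).isClosed
    (C.zero_notMem_convexHull_inter_sphere hC)
  refine ⟨f, fun x hx hx0 => ?_⟩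
  have hunit := hfu _ (subset_convexHull ℝ _ (C.inv_norm_smul_mem_sphere hx hx0))
  rw [map_zero] at hu
  rw [map_smul, smul_eq_mul] at hunit
  have : 0 < ‖x‖⁻¹ * f x := hu.trans hunit
  exact pos_of_mul_pos_right this (by positivity)

end Cones

section Operators

variable {X : Type*} [NormedAddCommGroup X] [NormedSpace ℝ X]

theorem NormedSpace.exp_compL [CompleteSpace X] (A : X →L[ℝ] X) :
    NormedSpace.exp (ContinuousLinearMap.compL ℝ X X X A)
      = ContinuousLinearMap.compL ℝ X X X (NormedSpace.exp A) := by
  let leftMul : (X →L[ℝ] X) →+* ((X →L[ℝ] X) →L[ℝ] (X →L[ℝ] X)) :=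
    { toFun := ContinuousLinearMap.compL ℝ X X X
      map_one' := by ext; simp
      map_mul' _ _ := by ext; simp
      map_zero' := map_zero _
      map_add' := map_add _ }
  exact (NormedSpace.map_exp_of_mem_ball (𝕂 := ℝ) leftMul
    (ContinuousLinearMap.compL ℝ X X X).continuous A
    (by simp [NormedSpace.expSeries_radius_eq_top])).symm

/-- The functional `φ_{x,x'}` of the paper. -/
noncomputable def vectorFunctional (x : X) (x' : StrongDual ℝ X) : StrongDual ℝ (X →L[ℝ] X) :=
  x'.comp (ContinuousLinearMap.apply ℝ X x)

@[simp]
theorem vectorFunctional_apply (x : X) (x' : StrongDual ℝ X) (M : X →L[ℝ] X) :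
    vectorFunctional x x' M = x' (M x) := rfl

theorem continuous_vectorFunctional :
    Continuous fun p : X × StrongDual ℝ X => vectorFunctional p.1 p.2 :=
  continuous_snd.clm_comp ((ContinuousLinearMap.apply ℝ X).continuous.comp continuous_fst)

theorem vectorFunctional_smul_smul (a b : ℝ) (x : X) (x' : StrongDual ℝ X) :
    vectorFunctional (a • x) (b • x') = (a * b) • vectorFunctional x x' := by
  ext M
  simp [mul_assoc]

variable [FiniteDimensional ℝ X]

def vectorFunctionals (C : Set X) : Set (StrongDual ℝ (X →L[ℝ] X)) :=
  image2 vectorFunctional C (ProperCone.dual (topDualPairing ℝ X).flip C)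

theorem eventually_nonneg_of_mem_hull_vectorFunctionals {C : Set X} {ι : Type*} {l : Filter ι}
    {F : ι → X →L[ℝ] X} (hF : ∀ x ∈ C, ∀ᶠ i in l, F i x ∈ C) {φ : StrongDual ℝ (X →L[ℝ] X)}
    (hφ : φ ∈ PointedCone.hull ℝ (vectorFunctionals C)) : ∀ᶠ i in l, 0 ≤ φ (F i) := by
  induction hφ using Submodule.span_induction with
  | mem _ h =>
    obtain ⟨x, hx, x', hx', rfl⟩ := h
    exact (hF x hx).mono fun i hi => hx' hi
  | zero => simp
  | add _ _ _ _ h₁ h₂ =>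
    filter_upwards [h₁, h₂] with i h₁ h₂
    simpa using add_nonneg h₁ h₂
  | smul a _ _ h =>
    filter_upwards [h] with i h
    rw [← Nonneg.coe_smul, smul_apply, smul_eq_mul]
    exact mul_nonneg a.2 h

theorem isClosed_hull_vectorFunctionals (C : ProperCone ℝ X) (hC : ∀ x ∈ C, -x ∈ C → x = 0)
    (hint : (interior (C : Set X)).Nonempty) :
    IsClosed (PointedCone.hull ℝ (vectorFunctionals (C : Set X)) :
      Set (StrongDual ℝ (X →L[ℝ] X))) := by
  obtain ⟨e, he⟩ := hint
  obtain ⟨f, hf⟩ := C.exists_pos_of_salient hC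
  set C' := ProperCone.dual (topDualPairing ℝ X).flip (C : Set X)
  rw [vectorFunctionals, C.hull_image2_eq_hull_image2_inter_sphere C' vectorFunctional_smul_smul]
  -- `φ_{x,x'}` evaluated at `f(·) e` is `f x * x' e`.
  refine PointedCone.isClosed_hull_of_isCompact (E := StrongDual ℝ (X →L[ℝ] X)) ?_
    (f := NormedSpace.inclusionInDoubleDual ℝ _ (f.smulRight e)) ?_
  · rw [← image_prod]
    exact (((isCompact_sphere 0 1).inter_left C.isClosed).prod
      ((isCompact_sphere 0 1).inter_left C'.isClosed)).image continuous_vectorFunctional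
  · rintro _ ⟨x, ⟨hxC, hx1⟩, x', ⟨hx'C, hx'1⟩, rfl⟩
    have hx0 : x ≠ 0 := by rintro rfl; simp at hx1
    have hx'0 : x' ≠ 0 := by rintro rfl; simp at hx'1
    simpa using mul_pos (hf x hxC hx0)
      (StrongDual.pos_of_mem_interior he (fun y hy => hx'C hy) hx'0)

theorem mem_hull_vectorFunctionals (C : ProperCone ℝ X) (hC : ∀ x ∈ C, -x ∈ C → x = 0)
    (hint : (interior (C : Set X)).Nonempty) {φ : StrongDual ℝ (X →L[ℝ] X)}
    (hφ : ∀ M : X →L[ℝ] X, (∀ x ∈ C, M x ∈ C) → 0 ≤ φ M) :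
    φ ∈ PointedCone.hull ℝ (vectorFunctionals (C : Set X)) := by
  -- The bipolar theorem, for the closed cone `G` in `L(X)'` and for `C` in `X`.
  let G : ProperCone ℝ (StrongDual ℝ (X →L[ℝ] X)) :=
    ⟨PointedCone.hull ℝ (vectorFunctionals (C : Set X)), isClosed_hull_vectorFunctionals C hC hint⟩
  suffices φ ∈ ProperCone.dual (topDualPairing ℝ (X →L[ℝ] X)).flip
      (ProperCone.dual (topDualPairing ℝ (X →L[ℝ] X)) (G : Set _) : Set (X →L[ℝ] X)) by
    rwa [ProperCone.dual_flip_dual] at this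
  refine fun M hM => hφ M fun x hx => ?_
  have : M x ∈ ProperCone.dual (topDualPairing ℝ X)
      (ProperCone.dual (topDualPairing ℝ X).flip (C : Set X)) :=
    fun x' hx' => hM (PointedCone.subset_hull (mem_image2_of_mem hx hx'))
  rwa [ProperCone.dual_dual_flip] at this

end Operators

/-- Let `X` be a finite-dimensional real normed space ordered by a closed
cone `C` with non-empty interior and let `A` be a linear operator on `X`. Consider the space
`L(X)` with the cone `L(X)₊ = {M | M C ⊆ C}` and the operator `B : M ↦ A ∘ M` of left
multiplication by `A`, whose semigroup satisfies `e^{tB}(M) = e^{tA} M`. If `(e^{tA})_{t ≥ 0}`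
is individually but not uniformly eventually nonnegative w.r.t. `C`, then `(e^{tB})_{t ≥ 0}`
is weakly but not individually eventually nonnegative w.r.t. `L(X)₊`. -/
theorem leftMultiplication_weakly_not_individually_eventually_nonneg
    (X : Type*) [NormedAddCommGroup X] [NormedSpace ℝ X] [FiniteDimensional ℝ X]
    (C : Set X) (hC_closed : IsClosed C)
    (hC_add : ∀ x ∈ C, ∀ y ∈ C, x + y ∈ C)
    (hC_smul : ∀ (l : ℝ), 0 ≤ l → ∀ x ∈ C, l • x ∈ C)
    (hC_pointed : C ∩ (-C) = {0})
    (hC_int : (interior C).Nonempty)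
    (A : X →L[ℝ] X)
    (h_ind : ∀ x ∈ C, ∃ t₀ : ℝ, 0 ≤ t₀ ∧ ∀ t : ℝ, t₀ ≤ t → NormedSpace.exp (t • A) x ∈ C)
    (h_not_unif : ¬ ∃ t₀ : ℝ, 0 ≤ t₀ ∧ ∀ t : ℝ, t₀ ≤ t → ∀ x ∈ C,
      NormedSpace.exp (t • A) x ∈ C) :
    (∀ M ∈ {M : X →L[ℝ] X | ∀ x ∈ C, M x ∈ C},
      ∀ φ ∈ {ψ : (X →L[ℝ] X) →L[ℝ] ℝ |
        ∀ T : X →L[ℝ] X, (∀ x ∈ C, T x ∈ C) → 0 ≤ ψ T},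
      ∃ t₀ : ℝ, 0 ≤ t₀ ∧ ∀ t : ℝ, t₀ ≤ t →
        0 ≤ φ (NormedSpace.exp (t • ContinuousLinearMap.compL ℝ X X X A) M)) ∧
    ¬ (∀ M ∈ {M : X →L[ℝ] X | ∀ x ∈ C, M x ∈ C},
      ∃ t₀ : ℝ, 0 ≤ t₀ ∧ ∀ t : ℝ, t₀ ≤ t →
        NormedSpace.exp (t • ContinuousLinearMap.compL ℝ X X X A) M ∈
          {M' : X →L[ℝ] X | ∀ x ∈ C, M' x ∈ C}) := by
  have hC_zero : (0 : X) ∈ C := (hC_pointed.ge (mem_singleton 0)).1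
  obtain ⟨K, rfl⟩ : ∃ K : ProperCone ℝ X, (K : Set X) = C :=
    ⟨⟨⟨⟨⟨C, fun hx hy => hC_add _ hx _ hy⟩, hC_zero⟩, fun c x hx => hC_smul c c.2 x hx⟩,
      hC_closed⟩, rfl⟩
  have hK_salient : ∀ x ∈ K, -x ∈ K → x = 0 := fun x hx hnx => by
    have h : x ∈ (K : Set X) ∩ -K := ⟨hx, hnx⟩
    rwa [hC_pointed] at h
  have hexp (t : ℝ) (M : X →L[ℝ] X) :
      NormedSpace.exp (t • ContinuousLinearMap.compL ℝ X X X A) M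
        = NormedSpace.exp (t • A) ∘L M := by
    rw [← map_smul, NormedSpace.exp_compL]; rfl
  have hatTop := Filter.atTop_basis' (0 : ℝ)
  refine ⟨fun M hM φ hφ => ?_, fun h_ind_B => h_not_unif ?_⟩
  · have := eventually_nonneg_of_mem_hull_vectorFunctionals (l := Filter.atTop)
      (F := fun t => NormedSpace.exp (t • A) ∘L M)
      (fun x hx => hatTop.eventually_iff.2 (h_ind _ (hM x hx)))
      (mem_hull_vectorFunctionals K hK_salient hC_int hφ)
    simpa only [hexp, mem_Ici] using hatTop.eventually_iff.1 this
  · obtain ⟨t₀, ht₀, h⟩ := h_ind_B (ContinuousLinearMap.id ℝ X) fun x hx => hx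
    exact ⟨t₀, ht₀, fun t ht x hx => by simpa [hexp] using h t ht x hx⟩
end
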